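/- Let n ≥ 2, let A : ℝ → Mₙ(ℝ) be differentiable, let f : ℝ → ℝⁿ be differentiable, and define X : ℝ × ℝⁿ → ℝⁿ by Xⁱ(t,x) = Σ_{k=1}^n A(t)_{ik} xᵏ + fⁱ(t). Then the temporal torsion components of the canonical generalized Cartan connection produced by this non-homogeneous linear ODEs system, namely R_{(1)1j}^{(i)}(t,x) = (1/2)[ ∂/∂xʲ(∂Xⁱ/∂t)(t,x) − ∂/∂xⁱ(∂Xʲ/∂t)(t,x) ], equal (1/2)(A'(t)_{ij} − A'(t)_{ji}) for all (t,x), where A'(t) is the entrywise derivative of A. -/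

import Mathlib

/-- Partial derivative of `g : ℝⁿ → ℝ` at `x` in the `j`-th coordinate direction. -/
noncomputable def pd {n : ℕ} (g : (Fin n → ℝ) → ℝ) (x : Fin n → ℝ) (j : Fin n) : ℝ :=
  fderiv ℝ g x (Pi.single j 1)

/-- The temporal torsion components produced by the first-order ODE system
`dxⁱ/dt = Xⁱ(t,x)`:
`R_{(1)1j}^{(i)}(t,x) = (1/2)[∂/∂xʲ(∂Xⁱ/∂t) - ∂/∂xⁱ(∂Xʲ/∂t)]`. -/
noncomputable def temporalTorsion {n : ℕ} (X : ℝ → (Fin n → ℝ) → Fin n → ℝ)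
    (t : ℝ) (x : Fin n → ℝ) (i j : Fin n) : ℝ :=
  (1 / 2) * (pd (fun y => deriv (fun s => X s y i) t) x j
           - pd (fun y => deriv (fun s => X s y j) t) x i)

lemma pd_affine {n : ℕ} (c : Fin n → ℝ) (d : ℝ) (x : Fin n → ℝ) (j : Fin n) :
    pd (fun y => (∑ k : Fin n, c k * y k) + d) x j = c j := by
  have hsum : HasFDerivAt (fun y : Fin n → ℝ => ∑ k : Fin n, c k * y k)
      (∑ k : Fin n, c k • ContinuousLinearMap.proj (R := ℝ) (φ := fun _ : Fin n => ℝ) k) x :=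
    HasFDerivAt.fun_sum fun k _ => (hasFDerivAt_apply k x).const_mul (c k)
  rw [pd, (hsum.add_const d).fderiv]
  simp [Pi.single_apply]

lemma deriv_sum_mul_const_add {ι : Type*} [Fintype ι] {a : ι → ℝ → ℝ} {b : ℝ → ℝ} {t : ℝ}
    (ha : ∀ k, DifferentiableAt ℝ (a k) t) (hb : DifferentiableAt ℝ b t) (y : ι → ℝ) :
    deriv (fun s => (∑ k, a k s * y k) + b s) t = (∑ k, deriv (a k) t * y k) + deriv b t :=
  ((HasDerivAt.fun_sum fun k _ => (ha k).hasDerivAt.mul_const (y k)).add hb.hasDerivAt).deriv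

theorem temporal_torsion_of_linear_system_general
    (n : ℕ)
    (A : ℝ → Matrix (Fin n) (Fin n) ℝ) (f : ℝ → Fin n → ℝ)
    (hA : ∀ i j : Fin n, Differentiable ℝ (fun t => A t i j))
    (hf : ∀ i : Fin n, Differentiable ℝ (fun t => f t i)) :
    ∀ (t : ℝ) (x : Fin n → ℝ) (i j : Fin n),
      temporalTorsion (fun t x i => (∑ k : Fin n, A t i k * x k) + f t i) t x i j
        = (1 / 2) * (deriv (fun s => A s i j) t - deriv (fun s => A s j i) t) := by
  intro t x i j
  have hX : ∀ i, (fun y : Fin n → ℝ => deriv (fun s => (∑ k, A s i k * y k) + f s i) t)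
      = fun y => (∑ k, deriv (fun s => A s i k) t * y k) + deriv (fun s => f s i) t :=
    fun i => funext <| deriv_sum_mul_const_add (fun k => (hA i k).differentiableAt)
      (hf i).differentiableAt
  rw [temporalTorsion, hX i, hX j, pd_affine, pd_affine]

/-- for the non-homogeneous linear first-order ODEs system
`dxⁱ/dt = ∑ₖ A(t)_{ik} xᵏ + fⁱ(t)` with differentiable `A` and `f`, the temporal
torsion components equal `(1/2)(A'(t)_{ij} - A'(t)_{ji})`. -/
theorem temporal_torsion_of_linear_system
    (n : ℕ) (hn : 2 ≤ n)
    (A : ℝ → Matrix (Fin n) (Fin n) ℝ) (f : ℝ → Fin n → ℝ)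
    (hA : ∀ i j : Fin n, Differentiable ℝ (fun t => A t i j))
    (hf : ∀ i : Fin n, Differentiable ℝ (fun t => f t i)) :
    ∀ (t : ℝ) (x : Fin n → ℝ) (i j : Fin n),
      temporalTorsion (fun t x i => (∑ k : Fin n, A t i k * x k) + f t i) t x i j
        = (1 / 2) * (deriv (fun s => A s i j) t - deriv (fun s => A s j i) t) :=
  temporal_torsion_of_linear_system_general n A f hA hf
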